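/- arXiv:math/0607151 — 7 statements merged into one kernel-verified Lean document; each statement's English description precedes it below -/
import Mathlib

section
/- Let n ≥ 2 and m ≥ 1 be integers. For all m-diagonals D and D′ of the regular (nm+2)-gon, there is an arrow from D to D′ in Γ^m_{A_{n−1}} if and only if there is an arrow from τ_m(D′) to D. Consequently (Γ^m_{A_{n−1}}, τ_m) is a stable translation quiver. -/
/-- An `m`-diagonal of the regular `(n*m+2)`-gon, with vertices labelled by
`ZMod (n*m+2)`: an unordered pair of the form `{i, i+k*m+1}` with `1 ≤ k ≤ n-1`. -/
def IsMDiagonal (n m : ℕ) (p : Sym2 (ZMod (n*m+2))) : Prop :=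
  ∃ (i : ZMod (n*m+2)) (k : ℕ), 1 ≤ k ∧ k ≤ n - 1 ∧
    p = s(i, i + ((k*m+1 : ℕ) : ZMod (n*m+2)))

/-- The translation `τ_m`, sending `{i,j}` to `{i-m, j-m}`. -/
def tauM (n m : ℕ) : Sym2 (ZMod (n*m+2)) → Sym2 (ZMod (n*m+2)) :=
  Sym2.map (fun x => x - (m : ZMod (n*m+2)))

/-- There is an arrow `D → D'` in `Γ^m_{A_{n-1}}`: both `D` and `D'` are
`m`-diagonals, and `D'` is obtained from `D = {a,b}` by replacing the
endpoint `b` by `b+m`. -/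
def HasArrow (n m : ℕ) (D D' : Sym2 (ZMod (n*m+2))) : Prop :=
  IsMDiagonal n m D ∧ IsMDiagonal n m D' ∧
    ∃ a b : ZMod (n*m+2), D = s(a, b) ∧ D' = s(a, b + (m : ZMod (n*m+2)))

/-!
`τ_m` is the rotation by `-m`, inverse to the rotation by `+m`, and every rotation
preserves `m`-diagonals. If `D' = {a, b+m}` comes from `D = {a, b}`, then
`τ_m D' = {b, a-m}`, and `D = {b, a}` comes from it by moving the endpoint `a-m` to `a`;
conversely `τ_m D' = {a, b}` and `D = {a, b+m}` give `D' = {b+m, a+m}`, obtained from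
`D = {b+m, a}`.
-/

section

variable {n m : ℕ}

@[simp]
lemma tauM_mk (x y : ZMod (n*m+2)) : tauM n m s(x, y) = s(x - m, y - m) := rfl

lemma IsMDiagonal.map_add {p : Sym2 (ZMod (n*m+2))} (hp : IsMDiagonal n m p)
    (c : ZMod (n*m+2)) : IsMDiagonal n m (p.map (· + c)) := by
  obtain ⟨i, k, hk, hkn, rfl⟩ := hp
  exact ⟨i + c, k, hk, hkn, by simp [add_right_comm]⟩

lemma IsMDiagonal.tauM {p : Sym2 (ZMod (n*m+2))} (hp : IsMDiagonal n m p) :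
    IsMDiagonal n m (tauM n m p) := by
  simpa only [_root_.tauM, sub_eq_add_neg] using hp.map_add (-m)

lemma tauM_map_add (p : Sym2 (ZMod (n*m+2))) :
    tauM n m (p.map (· + (m : ZMod (n*m+2)))) = p := by
  induction p using Sym2.ind with
  | _ x y => simp

lemma map_add_tauM (p : Sym2 (ZMod (n*m+2))) :
    (tauM n m p).map (· + (m : ZMod (n*m+2))) = p := by
  induction p using Sym2.ind with
  | _ x y => simp

lemma hasArrow_tauM_of_hasArrow {D D' : Sym2 (ZMod (n*m+2))} (h : HasArrow n m D D') :
    HasArrow n m (tauM n m D') D := by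
  obtain ⟨hD, hD', a, b, rfl, rfl⟩ := h
  exact ⟨hD'.tauM, hD, b, a - m, by simp [Sym2.eq_swap], by simp [Sym2.eq_swap]⟩

lemma hasArrow_of_hasArrow_tauM {D D' : Sym2 (ZMod (n*m+2))} (hD' : IsMDiagonal n m D')
    (h : HasArrow n m (tauM n m D') D) : HasArrow n m D D' := by
  obtain ⟨-, hD, a, b, hab, rfl⟩ := h
  refine ⟨hD, hD', b + m, a, Sym2.eq_swap, ?_⟩
  rw [← map_add_tauM D', hab, Sym2.map_mk, Sym2.eq_swap]

lemma bijOn_tauM : Set.BijOn (tauM n m) {p | IsMDiagonal n m p} {p | IsMDiagonal n m p} :=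
  Set.InvOn.bijOn ⟨fun p _ => map_add_tauM p, fun p _ => tauM_map_add p⟩
    (fun _ hp => hp.tauM) (fun _ hp => hp.map_add _)

end

theorem stmt1_general (n m : ℕ) :
    (∀ D D' : Sym2 (ZMod (n*m+2)), IsMDiagonal n m D → IsMDiagonal n m D' →
      (HasArrow n m D D' ↔ HasArrow n m (tauM n m D') D)) ∧
    Set.BijOn (tauM n m) {p | IsMDiagonal n m p} {p | IsMDiagonal n m p} :=
  ⟨fun _ _ _ hD' => ⟨hasArrow_tauM_of_hasArrow, hasArrow_of_hasArrow_tauM hD'⟩, bijOn_tauM⟩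

/-- There is an arrow `D → D'` iff there is an arrow `τ_m(D') → D`; together
with the fact that `τ_m` is a bijection of the set of `m`-diagonals, this says
that `(Γ^m_{A_{n-1}}, τ_m)` is a stable translation quiver. -/
theorem stmt1 (n m : ℕ) (hn : 2 ≤ n) (hm : 1 ≤ m) :
    (∀ D D' : Sym2 (ZMod (n*m+2)), IsMDiagonal n m D → IsMDiagonal n m D' →
      (HasArrow n m D D' ↔ HasArrow n m (tauM n m D') D)) ∧
    Set.BijOn (tauM n m) {p | IsMDiagonal n m p} {p | IsMDiagonal n m p} :=
  stmt1_general n m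
end

section
/- Let n ≥ 2 and m ≥ 1 be integers. The stable translation quiver (Γ^m_{A_{n−1}}, τ_m) is connected: for any two m-diagonals D and D′ of the regular (nm+2)-gon, there is a finite sequence D = D_0, D_1, …, D_k = D′ of m-diagonals such that for each s either there is an arrow between D_{s−1} and D_s (in one direction or the other) in Γ^m_{A_{n−1}}, or D_s = τ_m(D_{s−1}), or D_{s−1} = τ_m(D_s). In particular Γ^m_{A_{n−1}} is not a disjoint union of two non-empty stable subquivers. -/
/-- One step in the stable translation quiver `(Γ^m_{A_{n-1}}, τ_m)`:
`X` and `Y` are `m`-diagonals and either there is an arrow between them (in one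
direction or the other), or they are related by the translation `τ_m`
(in one direction or the other). -/
def QuiverStep (n m : ℕ) (X Y : Sym2 (ZMod (n*m+2))) : Prop :=
  IsMDiagonal n m X ∧ IsMDiagonal n m Y ∧
    (HasArrow n m X Y ∨ HasArrow n m Y X ∨ Y = tauM n m X ∨ X = tauM n m Y)

namespace QuiverStep

variable {n m : ℕ}

def mDiagonal (n m : ℕ) (i : ZMod (n*m+2)) (k : ℕ) : Sym2 (ZMod (n*m+2)) :=
  s(i, i + ((k*m+1 : ℕ) : ZMod (n*m+2)))

local notation "Connected" => Relation.ReflTransGen (QuiverStep n m)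

lemma isMDiagonal_mDiagonal (i : ZMod (n*m+2)) {k : ℕ} (hk₁ : 1 ≤ k) (hk₂ : k ≤ n - 1) :
    IsMDiagonal n m (mDiagonal n m i k) :=
  ⟨i, k, hk₁, hk₂, rfl⟩

lemma tauM_mDiagonal (i : ZMod (n*m+2)) (k : ℕ) :
    tauM n m (mDiagonal n m i k) = mDiagonal n m (i - m) k := by
  rw [tauM, mDiagonal, mDiagonal, Sym2.map_mk, Sym2.eq_iff]
  exact Or.inl ⟨rfl, by ring⟩

lemma mDiagonal_eq_mDiagonal_add_sub {k : ℕ} (hk : k ≤ n) (i : ZMod (n*m+2)) :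
    mDiagonal n m i k = mDiagonal n m (i + ((k*m+1 : ℕ) : ZMod (n*m+2))) (n - k) := by
  have hsum : (k*m+1) + ((n-k)*m+1) = n*m+2 := by
    have := Nat.mul_le_mul_right m hk
    rw [Nat.sub_mul]
    omega
  have hzero : ((k*m+1 : ℕ) : ZMod (n*m+2)) + (((n-k)*m+1 : ℕ) : ZMod (n*m+2)) = 0 := by
    rw [← Nat.cast_add, hsum, ZMod.natCast_self]
  rw [mDiagonal, mDiagonal, Sym2.eq_swap, add_assoc, hzero, add_zero]

instance : Std.Symm (QuiverStep n m) where
  symm _ _ := fun ⟨hX, hY, h⟩ => ⟨hY, hX, by tauto⟩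

lemma mDiagonal_tauM (i : ZMod (n*m+2)) {k : ℕ} (hk₁ : 1 ≤ k) (hk₂ : k ≤ n - 1) :
    QuiverStep n m (mDiagonal n m i k) (mDiagonal n m (i - m) k) :=
  ⟨isMDiagonal_mDiagonal i hk₁ hk₂, isMDiagonal_mDiagonal _ hk₁ hk₂,
    Or.inr (Or.inr (Or.inl (tauM_mDiagonal i k).symm))⟩

lemma mDiagonal_succ (i : ZMod (n*m+2)) {k : ℕ} (hk₁ : 1 ≤ k) (hk₂ : k + 1 ≤ n - 1) :
    QuiverStep n m (mDiagonal n m i k) (mDiagonal n m i (k + 1)) := by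
  have hD := isMDiagonal_mDiagonal i hk₁ (by omega : k ≤ n - 1)
  have hD' := isMDiagonal_mDiagonal i (by omega : 1 ≤ k + 1) hk₂
  refine ⟨hD, hD', Or.inl ⟨hD, hD', i, _, rfl, ?_⟩⟩
  rw [mDiagonal, Sym2.eq_iff]
  exact Or.inl ⟨rfl, by push_cast; ring⟩

lemma connected_mDiagonal_one (i : ZMod (n*m+2)) {k : ℕ} (hk₁ : 1 ≤ k) (hk₂ : k ≤ n - 1) :
    Connected (mDiagonal n m i 1) (mDiagonal n m i k) := by
  induction k, hk₁ using Nat.le_induction with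
  | base => exact .refl
  | succ k hk ih => exact (ih (by omega)).tail (mDiagonal_succ i hk hk₂)

lemma connected_mDiagonal_one_add_one (hn : 2 ≤ n) (i : ZMod (n*m+2)) :
    Connected (mDiagonal n m i 1) (mDiagonal n m (i + 1) 1) := by
  set j := i + ((1*m+1 : ℕ) : ZMod (n*m+2))
  have hj : j - m = i + 1 := by
    push_cast [j]
    ring
  rw [mDiagonal_eq_mDiagonal_add_sub (by omega) i, ← hj]
  exact (symm (connected_mDiagonal_one j (by omega) le_rfl)).tail
    (mDiagonal_tauM j le_rfl (by omega))

lemma connected_mDiagonal_one_add_natCast (hn : 2 ≤ n) (i : ZMod (n*m+2)) (c : ℕ) :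
    Connected (mDiagonal n m i 1) (mDiagonal n m (i + c) 1) := by
  induction c with
  | zero => simpa using .refl
  | succ c ih =>
    rw [Nat.cast_succ, ← add_assoc]
    exact ih.trans (connected_mDiagonal_one_add_one hn _)

lemma connected_mDiagonal_one_mDiagonal_one (hn : 2 ≤ n) (i i' : ZMod (n*m+2)) :
    Connected (mDiagonal n m i 1) (mDiagonal n m i' 1) := by
  have : NeZero (n*m+2) := ⟨by omega⟩
  obtain ⟨c, hc⟩ := ZMod.natCast_zmod_surjective (i' - i)
  simpa [hc] using connected_mDiagonal_one_add_natCast hn i c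

end QuiverStep

open QuiverStep in
theorem stmt2_general (n m : ℕ) (hn : 2 ≤ n)
    (D D' : Sym2 (ZMod (n*m+2))) (hD : IsMDiagonal n m D) (hD' : IsMDiagonal n m D') :
    Relation.ReflTransGen (QuiverStep n m) D D' := by
  obtain ⟨i, k, hk₁, hk₂, rfl⟩ := hD
  obtain ⟨i', k', hk₁', hk₂', rfl⟩ := hD'
  exact (symm (connected_mDiagonal_one i hk₁ hk₂)).trans <|
    (connected_mDiagonal_one_mDiagonal_one hn i i').trans
      (connected_mDiagonal_one i' hk₁' hk₂')

/-- `(Γ^m_{A_{n-1}}, τ_m)` is connected: any two `m`-diagonals are joined by a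
finite sequence of `m`-diagonals in which each consecutive pair is related by
an arrow (in one direction or the other) or by the translation `τ_m` (in one
direction or the other).  In particular, `Γ^m_{A_{n-1}}` is not a disjoint
union of two non-empty stable subquivers. -/
theorem stmt2 (n m : ℕ) (hn : 2 ≤ n) (hm : 1 ≤ m)
    (D D' : Sym2 (ZMod (n*m+2))) (hD : IsMDiagonal n m D) (hD' : IsMDiagonal n m D') :
    Relation.ReflTransGen (QuiverStep n m) D D' :=
  stmt2_general n m hn D D' hD hD'
end

section
/- Let n ≥ 2 and m ≥ 1 be integers. Every vertex of the regular (nm+2)-gon is incident with some element of any given τ_m-orbit of m-diagonals. Explicitly, for an m-diagonal D = {i, i+km+1} with 1 ≤ k ≤ n−1, one has τ_m^{k−n}(D) = {i+(n−k)m, i−1} (indices mod nm+2); in particular, for every vertex v of the polygon there is an integer t such that v is an endpoint of τ_m^t(D). -/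
/-- The translation `τ_m` as a permutation of unordered pairs of vertices:
it sends `{i,j}` to `{i-m, j-m}` (anticlockwise rotation through `2mπ/(nm+2)`). -/
def tauMPerm (N m : ℕ) : Equiv.Perm (Sym2 (ZMod N)) where
  toFun := Sym2.map (fun x => x - (m : ZMod N))
  invFun := Sym2.map (fun x => x + (m : ZMod N))
  left_inv p := by
    induction p with
    | _ a b => simp
  right_inv p := by
    induction p with
    | _ a b => simp

/-!
The orbit of an endpoint under `τ_m` is a coset of the subgroup `H` of `ℤ/(nm+2)` generated by `m`.
Since `2 = -n·m ∈ H`, `H` has index at most two, and the cosets of two vertices differing by an odd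
number cover everything. The two endpoints `i` and `i + km + 1` of an `m`-diagonal are such a pair.
-/

lemma tauMPerm_apply (N m : ℕ) (a b : ZMod N) :
    tauMPerm N m s(a, b) = s(a - m, b - m) := rfl

lemma tauMPerm_inv_apply (N m : ℕ) (a b : ZMod N) :
    (tauMPerm N m)⁻¹ s(a, b) = s(a + m, b + m) := rfl

lemma tauMPerm_zpow_apply (N m : ℕ) (t : ℤ) (a b : ZMod N) :
    (tauMPerm N m ^ t) s(a, b) = s(a - t * m, b - t * m) := by
  induction t using Int.induction_on generalizing a b with
  | zero => simp
  | succ j ih =>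
    rw [zpow_add_one, Equiv.Perm.mul_apply, tauMPerm_apply, ih]
    push_cast
    congr 1 <;> ring
  | pred j ih =>
    rw [zpow_sub_one, Equiv.Perm.mul_apply, tauMPerm_inv_apply, ih]
    push_cast
    congr 1 <;> ring

lemma ZMod.mem_or_sub_one_mem_of_two_mem {N : ℕ} {H : AddSubgroup (ZMod N)}
    (h2 : (2 : ZMod N) ∈ H) (x : ZMod N) : x ∈ H ∨ x - 1 ∈ H := by
  obtain ⟨c, rfl⟩ := ZMod.intCast_surjective x
  rcases Int.even_or_odd' c with ⟨j, rfl | rfl⟩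
  · left
    simpa [mul_comm] using H.zsmul_mem h2 j
  · right
    simpa [mul_comm] using H.zsmul_mem h2 j

theorem stmt3_general (n m : ℕ) (i : ZMod (n*m+2)) (k : ℕ)
    (h2 : k ≤ n - 1) :
    ((tauMPerm (n*m+2) m) ^ ((k : ℤ) - (n : ℤ)))
        s(i, i + ((k*m+1 : ℕ) : ZMod (n*m+2)))
      = s(i + (((n-k)*m : ℕ) : ZMod (n*m+2)), i - 1) ∧
    ∀ v : ZMod (n*m+2), ∃ t : ℤ,
      v ∈ ((tauMPerm (n*m+2) m) ^ t) s(i, i + ((k*m+1 : ℕ) : ZMod (n*m+2))) := by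
  have hN : (n : ZMod (n*m+2)) * m + 2 = 0 := by exact_mod_cast ZMod.natCast_self (n*m+2)
  refine ⟨?_, fun v => ?_⟩
  · rw [tauMPerm_zpow_apply]
    push_cast [Nat.cast_sub (h2.trans (n.sub_le 1))]
    congr 1
    · ring
    · linear_combination hN
  have two_mem : (2 : ZMod (n*m+2)) ∈ AddSubgroup.zmultiples (m : ZMod (n*m+2)) :=
    ⟨-n, by simp only [zsmul_eq_mul, Int.cast_neg, Int.cast_natCast]; linear_combination -hN⟩
  simp only [tauMPerm_zpow_apply, Sym2.mem_iff]
  rcases ZMod.mem_or_sub_one_mem_of_two_mem two_mem (v - i) with ⟨t, ht⟩ | ⟨t, ht⟩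
  · refine ⟨-t, Or.inl ?_⟩
    simp only [zsmul_eq_mul] at ht
    push_cast
    linear_combination -ht
  · refine ⟨k - t, Or.inr ?_⟩
    simp only [zsmul_eq_mul] at ht
    push_cast
    linear_combination -ht

theorem stmt3 (n m : ℕ) (hn : 2 ≤ n) (hm : 1 ≤ m) (i : ZMod (n*m+2)) (k : ℕ)
    (h1 : 1 ≤ k) (h2 : k ≤ n - 1) :
    ((tauMPerm (n*m+2) m) ^ ((k : ℤ) - (n : ℤ)))
        s(i, i + ((k*m+1 : ℕ) : ZMod (n*m+2)))
      = s(i + (((n-k)*m : ℕ) : ZMod (n*m+2)), i - 1) ∧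
    ∀ v : ZMod (n*m+2), ∃ t : ℤ,
      v ∈ ((tauMPerm (n*m+2) m) ^ t) s(i, i + ((k*m+1 : ℕ) : ZMod (n*m+2))) :=
  stmt3_general n m i k h2
end

section
/- Let n ≥ 2 and m ≥ 1 be integers. Consider the following set S of m-diagonals of the regular (nm+2)-gon (labels mod nm+2): the m-snake diagonals D_{2i−1} = {(i−1)m+1, (n−i)m+2} for 1 ≤ i ≤ n/2 and D_{2i} = {im+1, (n−i)m+2} for 1 ≤ i ≤ (n−1)/2, together with the diagonals E_{2i−1} = {im+1, (n+1−i)m+2} for 1 ≤ i ≤ n/2. Then the only arrows of Γ^m_{A_{n−1}} between members of S are: D_{2i−1} → D_{2i} (1 ≤ i ≤ (n−1)/2), D_{2i+1} → D_{2i} (1 ≤ i ≤ (n−2)/2), D_{2i} → E_{2i−1} (1 ≤ i ≤ n/2, when D_{2i} ∈ S), and D_{2i} → E_{2i+1} (1 ≤ i ≤ (n−2)/2). -/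
/-- The `m`-snake diagonal `D_{2i-1} = {(i-1)m+1, (n-i)m+2}`. -/
def Dodd (n m i : ℕ) : Sym2 (ZMod (n*m+2)) :=
  s((((i-1)*m+1 : ℕ) : ZMod (n*m+2)), (((n-i)*m+2 : ℕ) : ZMod (n*m+2)))

/-- The `m`-snake diagonal `D_{2i} = {im+1, (n-i)m+2}`. -/
def Deven (n m i : ℕ) : Sym2 (ZMod (n*m+2)) :=
  s(((i*m+1 : ℕ) : ZMod (n*m+2)), (((n-i)*m+2 : ℕ) : ZMod (n*m+2)))

/-- The diagonal `E_{2i-1} = {im+1, (n+1-i)m+2}` of the opposite `m`-snake. -/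
def Eodd (n m i : ℕ) : Sym2 (ZMod (n*m+2)) :=
  s(((i*m+1 : ℕ) : ZMod (n*m+2)), (((n+1-i)*m+2 : ℕ) : ZMod (n*m+2)))

/-- The set `S` consisting of the `m`-snake diagonals `D_{2i-1}` (`1 ≤ i ≤ n/2`)
and `D_{2i}` (`1 ≤ i ≤ (n-1)/2`) together with the diagonals `E_{2i-1}`
(`1 ≤ i ≤ n/2`). -/
def Ssnake (n m : ℕ) : Set (Sym2 (ZMod (n*m+2))) :=
  {p | (∃ i, 1 ≤ i ∧ 2*i ≤ n ∧ p = Dodd n m i) ∨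
       (∃ i, 1 ≤ i ∧ 2*i + 1 ≤ n ∧ p = Deven n m i) ∨
       (∃ i, 1 ≤ i ∧ 2*i ≤ n ∧ p = Eodd n m i)}

/-! Every member of `S` has the form `{am+1, bm+2}` with `a < b ≤ n`, and its type is read off
from `a + b`: `n - 1` for `D_{2i-1}`, `n` for `D_{2i}` and `n + 1` for `E_{2i-1}`. In these
coordinates an arrow is `(a, b) ↦ (a+1, b)` or `(a, b) ↦ (a, b+1)`, so it raises `a + b` by one,
and the four families of arrows are exactly the steps between consecutive types. Labels live
in `ℤ/(nm+2)`, but the labels `jm + c` (`j ≤ n`, `c ∈ {1, 2}`) lie in `[1, nm+2]`, so they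
agree as residues only when they agree as integers, which for `m = 1` allows
`jm + 2 = (j+1)m + 1`; these coincidences, and the wrap-around of `nm + 2 ≡ 0` to `m`, are
excluded by the bounds on `a` and `b`. -/

theorem ZMod.natCast_eq_natCast_iff_of_mem_Icc {N x y : ℕ} (hx : x ∈ Set.Icc 1 N)
    (hy : y ∈ Set.Icc 1 N) : (x : ZMod N) = y ↔ x = y := by
  refine ⟨fun h => ?_, congrArg _⟩
  obtain ⟨hx1, hxN⟩ := hx
  obtain ⟨hy1, hyN⟩ := hy
  have hmod : x - 1 ≡ y - 1 [MOD N] := by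
    refine Nat.ModEq.add_right_cancel' 1 ?_
    rwa [Nat.sub_add_cancel hx1, Nat.sub_add_cancel hy1, ← ZMod.natCast_eq_natCast_iff]
  have := hmod.eq_of_lt_of_lt (by omega) (by omega)
  omega

theorem Nat.mul_add_eq_mul_add_iff {j k m c d : ℕ} (hm : 0 < m) (hc : c ∈ Set.Icc 1 2)
    (hd : d ∈ Set.Icc 1 2) :
    j * m + c = k * m + d ↔ j = k ∧ c = d ∨ m = 1 ∧ j + c = k + d := by
  obtain ⟨hc1, hc2⟩ := hc
  obtain ⟨hd1, hd2⟩ := hd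
  constructor
  · intro h
    rcases Nat.lt_trichotomy j k with hjk | rfl | hkj
    · have := Nat.mul_le_mul_right m (Nat.succ_le_of_lt hjk)
      rw [Nat.succ_mul] at this
      obtain rfl : m = 1 := by omega
      simp only [Nat.mul_one] at h
      omega
    · omega
    · have := Nat.mul_le_mul_right m (Nat.succ_le_of_lt hkj)
      rw [Nat.succ_mul] at this
      obtain rfl : m = 1 := by omega
      simp only [Nat.mul_one] at h
      omega
  · rintro (⟨rfl, rfl⟩ | ⟨rfl, h⟩)
    · rfl
    · simpa only [Nat.mul_one] using h

section Coordinates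

variable {n m : ℕ}

theorem mul_add_mem_Icc {j c : ℕ} (hj : j ≤ n) (hc : c ∈ Set.Icc 1 2) :
    j * m + c ∈ Set.Icc 1 (n * m + 2) := by
  have := Nat.mul_le_mul_right m hj
  have ⟨hc1, hc2⟩ := hc
  exact ⟨by omega, by omega⟩

theorem natCast_mul_add_eq_natCast_mul_add_iff {j k c d : ℕ} (hm : 0 < m) (hj : j ≤ n)
    (hk : k ≤ n) (hc : c ∈ Set.Icc 1 2) (hd : d ∈ Set.Icc 1 2) :
    ((j * m + c : ℕ) : ZMod (n * m + 2)) = ((k * m + d : ℕ) : ZMod (n * m + 2)) ↔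
      j = k ∧ c = d ∨ m = 1 ∧ j + c = k + d := by
  rw [ZMod.natCast_eq_natCast_iff_of_mem_Icc (mul_add_mem_Icc hj hc) (mul_add_mem_Icc hk hd),
    Nat.mul_add_eq_mul_add_iff hm hc hd]

variable (n m) in
def diag (a b : ℕ) : Sym2 (ZMod (n * m + 2)) :=
  s(((a * m + 1 : ℕ) : ZMod (n * m + 2)), ((b * m + 2 : ℕ) : ZMod (n * m + 2)))

theorem Dodd_eq_diag (i : ℕ) : Dodd n m i = diag n m (i - 1) (n - i) := rfl

theorem Deven_eq_diag (i : ℕ) : Deven n m i = diag n m i (n - i) := rfl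

theorem Eodd_eq_diag (i : ℕ) : Eodd n m i = diag n m i (n + 1 - i) := rfl

theorem isMDiagonal_diag {a b : ℕ} (hab : a < b) (hba : b < a + n) :
    IsMDiagonal n m (diag n m a b) := by
  obtain ⟨k, rfl⟩ : ∃ k, b = a + k := ⟨b - a, by omega⟩
  refine ⟨((a * m + 1 : ℕ) : ZMod (n * m + 2)), k, by omega, by omega, ?_⟩
  rw [diag]
  congr 1
  push_cast
  ring

theorem diag_eq_diag_iff {a b a' b' : ℕ} (hm : 0 < m) (hab : a ≤ b) (hb : b ≤ n)
    (hab' : a' ≤ b') (hb' : b' ≤ n) : diag n m a b = diag n m a' b' ↔ a = a' ∧ b = b' := by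
  have h1 : (1 : ℕ) ∈ Set.Icc 1 2 := by simp
  have h2 : (2 : ℕ) ∈ Set.Icc 1 2 := by simp
  rw [diag, diag, Sym2.eq_iff,
    natCast_mul_add_eq_natCast_mul_add_iff hm (by omega) (by omega) h1 h1,
    natCast_mul_add_eq_natCast_mul_add_iff hm (by omega) (by omega) h2 h2,
    natCast_mul_add_eq_natCast_mul_add_iff hm (by omega) (by omega) h1 h2,
    natCast_mul_add_eq_natCast_mul_add_iff hm (by omega) (by omega) h2 h1]
  omega

theorem diag_ne_mk_natCast {a a' b' : ℕ} (hm : 0 < m) (ha : a < n) (hab' : a' < b')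
    (hb' : b' ≤ n) (hsum : n ≤ a' + b' + 1) :
    diag n m a' b' ≠ s(((a * m + 1 : ℕ) : ZMod (n * m + 2)), (m : ZMod (n * m + 2))) := by
  have hm_win : m ∈ Set.Icc 1 (n * m + 2) := by
    have := Nat.le_mul_of_pos_left m (show 0 < n by omega)
    exact ⟨hm, by omega⟩
  have hva' : a' * m + 1 ∈ Set.Icc 1 (n * m + 2) := mul_add_mem_Icc (by omega) (by simp)
  have hvb' : b' * m + 2 ∈ Set.Icc 1 (n * m + 2) := mul_add_mem_Icc hb' (by simp)
  have hva : a * m + 1 ∈ Set.Icc 1 (n * m + 2) := mul_add_mem_Icc ha.le (by simp)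
  rw [diag, Ne, Sym2.eq_iff, ZMod.natCast_eq_natCast_iff_of_mem_Icc hva' hva,
    ZMod.natCast_eq_natCast_iff_of_mem_Icc hvb' hm_win,
    ZMod.natCast_eq_natCast_iff_of_mem_Icc hva' hm_win,
    ZMod.natCast_eq_natCast_iff_of_mem_Icc hvb' hva]
  have := Nat.le_mul_of_pos_left m (show 0 < b' by omega)
  rintro (⟨-, h⟩ | ⟨h, h'⟩)
  · omega
  obtain rfl : a' = 0 := by
    by_contra ha'
    have := Nat.le_mul_of_pos_left m (Nat.pos_of_ne_zero ha')
    omega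
  obtain rfl : m = 1 := by omega
  simp only [Nat.mul_one] at h'
  omega

theorem exists_diag_step_iff {a b a' b' : ℕ} (hm : 0 < m) (hab : a < b) (hb : b ≤ n)
    (hab' : a' < b') (hb' : b' ≤ n) (hsum : n ≤ a' + b' + 1) :
    (∃ x y : ZMod (n * m + 2), diag n m a b = s(x, y) ∧ diag n m a' b' = s(x, y + m)) ↔
      a' = a + 1 ∧ b' = b ∨ a' = a ∧ b' = b + 1 := by
  have hshift (j c : ℕ) :
      ((j * m + c : ℕ) : ZMod (n * m + 2)) + m =
        (((j + 1) * m + c : ℕ) : ZMod (n * m + 2)) := by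
    push_cast
    ring
  constructor
  · rintro ⟨x, y, hxy, h⟩
    rw [diag, Sym2.eq_iff] at hxy
    rcases hxy with ⟨rfl, rfl⟩ | ⟨rfl, rfl⟩
    · rw [hshift] at h
      rcases Nat.lt_or_ge b n with hbn | hbn
      · have := (diag_eq_diag_iff (a' := a) (b' := b + 1) hm hab'.le hb' (by omega) hbn).1 h
        omega
      · obtain rfl : n = b := by omega
        -- the endpoint `nm + 2 ≡ 0` moves to `m`, which is not of the form `jm + 2`
        refine absurd ?_ (diag_ne_mk_natCast hm hab hab' hb' hsum)
        rw [h, show (n + 1) * m + 2 = m + (n * m + 2) by ring, Nat.cast_add m,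
          ZMod.natCast_self, add_zero]
    · rw [hshift, Sym2.eq_swap] at h
      have := (diag_eq_diag_iff (a' := a + 1) (b' := b) hm hab'.le hb' hab hb).1 h
      omega
  · rintro (⟨rfl, rfl⟩ | ⟨rfl, rfl⟩)
    · exact ⟨_, _, Sym2.eq_swap, by rw [hshift, diag, Sym2.eq_swap]⟩
    · exact ⟨_, _, rfl, by rw [hshift, diag]⟩

theorem hasArrow_diag_iff {a b a' b' : ℕ} (hm : 0 < m) (hab : a < b) (hba : b < a + n)
    (hb : b ≤ n) (hab' : a' < b') (hba' : b' < a' + n) (hb' : b' ≤ n)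
    (hsum : n ≤ a' + b' + 1) :
    HasArrow n m (diag n m a b) (diag n m a' b') ↔
      a' = a + 1 ∧ b' = b ∨ a' = a ∧ b' = b + 1 := by
  rw [HasArrow, ← exists_diag_step_iff hm hab hb hab' hb' hsum]
  simp only [isMDiagonal_diag hab hba, isMDiagonal_diag hab' hba', true_and]

theorem two_mul_add_one_le_of_Deven_mem {i : ℕ} (hm : 0 < m) (hi : 1 ≤ i) (hin : 2 * i ≤ n)
    (h : Deven n m i ∈ Ssnake n m) : 2 * i + 1 ≤ n := by
  rcases h with ⟨j, hj, hjn, h⟩ | ⟨j, hj, hjn, h⟩ | ⟨j, hj, hjn, h⟩ <;>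
    simp only [Dodd_eq_diag, Deven_eq_diag, Eodd_eq_diag] at h <;>
    rw [diag_eq_diag_iff hm] at h <;> omega

end Coordinates

theorem stmt5_general (n m : ℕ) (hm : 1 ≤ m)
    (D E : Sym2 (ZMod (n*m+2))) (hD : D ∈ Ssnake n m) (hE : E ∈ Ssnake n m) :
    HasArrow n m D E ↔
      ((∃ i, 1 ≤ i ∧ 2*i + 1 ≤ n ∧ D = Dodd n m i ∧ E = Deven n m i) ∨
       (∃ i, 1 ≤ i ∧ 2*i + 2 ≤ n ∧ D = Dodd n m (i+1) ∧ E = Deven n m i) ∨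
       (∃ i, 1 ≤ i ∧ 2*i ≤ n ∧ Deven n m i ∈ Ssnake n m ∧
          D = Deven n m i ∧ E = Eodd n m i) ∨
       (∃ i, 1 ≤ i ∧ 2*i + 2 ≤ n ∧ D = Deven n m i ∧ E = Eodd n m (i+1))) := by
  constructor
  · intro h
    rcases hD with ⟨i, hi, hin, rfl⟩ | ⟨i, hi, hin, rfl⟩ | ⟨i, hi, hin, rfl⟩ <;>
      rcases hE with ⟨j, hj, hjn, rfl⟩ | ⟨j, hj, hjn, rfl⟩ | ⟨j, hj, hjn, rfl⟩ <;>
      simp only [Dodd_eq_diag, Deven_eq_diag, Eodd_eq_diag] at h <;>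
      rw [hasArrow_diag_iff hm] at h <;> try omega
    · obtain rfl | rfl : i = j ∨ i = j + 1 := by omega
      · exact Or.inl ⟨i, hi, hjn, rfl, rfl⟩
      · exact Or.inr (Or.inl ⟨j, hj, by omega, rfl, rfl⟩)
    · obtain rfl | rfl : i = j ∨ j = i + 1 := by omega
      · have hDS : Deven n m i ∈ Ssnake n m := Or.inr (Or.inl ⟨i, hi, hin, rfl⟩)
        exact Or.inr (Or.inr (Or.inl ⟨i, hi, hjn, hDS, rfl, rfl⟩))
      · exact Or.inr (Or.inr (Or.inr ⟨i, hi, by omega, rfl, rfl⟩))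
  · rintro (⟨i, hi, hin, rfl, rfl⟩ | ⟨i, hi, hin, rfl, rfl⟩ |
      ⟨i, hi, hin, hDS, rfl, rfl⟩ | ⟨i, hi, hin, rfl, rfl⟩)
    on_goal 3 => have := two_mul_add_one_le_of_Deven_mem hm hi hin hDS
    all_goals
      simp only [Dodd_eq_diag, Deven_eq_diag, Eodd_eq_diag]
      rw [hasArrow_diag_iff hm] <;> omega

/-- The only arrows of `Γ^m_{A_{n-1}}` amongst members of `S` are
`D_{2i-1} → D_{2i}` (`1 ≤ i ≤ (n-1)/2`), `D_{2i+1} → D_{2i}` (`1 ≤ i ≤ (n-2)/2`),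
`D_{2i} → E_{2i-1}` (`1 ≤ i ≤ n/2`, when `D_{2i} ∈ S`) and `D_{2i} → E_{2i+1}`
(`1 ≤ i ≤ (n-2)/2`). -/
theorem stmt5 (n m : ℕ) (hn : 2 ≤ n) (hm : 1 ≤ m)
    (D E : Sym2 (ZMod (n*m+2))) (hD : D ∈ Ssnake n m) (hE : E ∈ Ssnake n m) :
    HasArrow n m D E ↔
      ((∃ i, 1 ≤ i ∧ 2*i + 1 ≤ n ∧ D = Dodd n m i ∧ E = Deven n m i) ∨
       (∃ i, 1 ≤ i ∧ 2*i + 2 ≤ n ∧ D = Dodd n m (i+1) ∧ E = Deven n m i) ∨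
       (∃ i, 1 ≤ i ∧ 2*i ≤ n ∧ Deven n m i ∈ Ssnake n m ∧
          D = Deven n m i ∧ E = Eodd n m i) ∨
       (∃ i, 1 ≤ i ∧ 2*i + 2 ≤ n ∧ D = Deven n m i ∧ E = Eodd n m (i+1))) :=
  stmt5_general n m hm D E hD hE
end

section
/- Let (Γ, τ) be a translation quiver such that whenever there is an arrow x → y and y is projective, x is also projective. Suppose x_0 → x_1 → ⋯ → x_m is a sectional path in Γ, let k_s be the number of arrows from x_{s−1} to x_s, and suppose τ^m(x_m) is defined. Then τ^s(x_s) is defined for s = 0, 1, …, m, there is a sectional path τ^m(x_m) → τ^{m−1}(x_{m−1}) → ⋯ → τ(x_1) → x_0 in Γ, and for each s the number of arrows from τ^s(x_s) to τ^{s−1}(x_{s−1}) equals k_s. -/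
/-- A quiver (given by its arrow types `A x y`) is locally finite if each
vertex has only finitely many arrows between any pair of vertices and only
finitely many neighbours. -/
def QuiverLocFin {V : Type*} (A : V → V → Type*) : Prop :=
  (∀ x y, Finite (A x y)) ∧ (∀ x, {y | Nonempty (A x y)}.Finite) ∧
    (∀ y, {x | Nonempty (A x y)}.Finite)

/-- The partially defined translation `τ : V → Option V` is injective on its
domain. -/
def TauInjective {V : Type*} (τ : V → Option V) : Prop :=
  ∀ x y z, τ x = some z → τ y = some z → x = y

/-- A translation quiver: a locally finite quiver together with an injective
partially defined translation `τ` such that for every vertex `x` and every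
vertex `y` in the domain of `τ`, the number of arrows from `x` to `y` equals
the number of arrows from `τ(y)` to `x`.  The projective vertices are those
outside the domain of `τ` (i.e. those with `τ y = none`). -/
def IsTranslationQuiver {V : Type*} (A : V → V → Type*) (τ : V → Option V) : Prop :=
  QuiverLocFin A ∧ TauInjective τ ∧
    ∀ x y z, τ y = some z → Nat.card (A x y) = Nat.card (A z x)

/-- The `k`-th iterate of the partially defined map `τ`. -/
def iterTau {V : Type*} (τ : V → Option V) : ℕ → V → Option V
  | 0, x => some x
  | k+1, x => (τ x).bind (iterTau τ k)

/-- The sectional condition on a sequence of vertices `v 0, v 1, …, v m`: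
`τ (v (s+1)) ≠ v (s-1)` for all `0 < s < m` for which `τ (v (s+1))` is
defined. -/
def SectCond {V : Type*} (τ : V → Option V) (m : ℕ) (v : Fin (m+1) → V) : Prop :=
  ∀ (s : ℕ) (_ : 1 ≤ s) (h2 : s + 1 ≤ m),
    τ (v ⟨s+1, by omega⟩) ≠ some (v ⟨s-1, by omega⟩)

/-- `v 0, v 1, …, v m` is (the sequence of vertices of) a sectional path:
there is an arrow `v s → v (s+1)` for each `s`, and the sectional condition
holds. -/
def IsSectionalPath {V : Type*} (A : V → V → Type*) (τ : V → Option V) (m : ℕ)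
    (v : Fin (m+1) → V) : Prop :=
  (∀ s : Fin m, Nonempty (A (v s.castSucc) (v s.succ))) ∧ SectCond τ m v

/-- The type of sectional paths of length `m` from `x` to `y`: a sequence of
vertices `v 0 = x, v 1, …, v m = y` satisfying the sectional condition,
together with a chosen arrow `v s → v (s+1)` for each `s`. -/
def SectPath {V : Type*} (A : V → V → Type*) (τ : V → Option V) (m : ℕ)
    (x y : V) : Type _ :=
  Σ v : {v : Fin (m+1) → V // v 0 = x ∧ v (Fin.last m) = y ∧ SectCond τ m v},
    ∀ s : Fin m, A (v.1 s.castSucc) (v.1 s.succ)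


/-!
Two applications of the mesh relation give `|x → y| = |τ y → x| = |τ x → τ y|`; alternating
them moves an arrow `x → y` to arrows `τ^{n+1} y → τ^n x` of the same multiplicity, and along
this zigzag the hypothesis on projectives keeps `τ` defined on `τ^n x` as long as `τ^{n+1} y` is
not projective. Descending induction on `s` then defines `τ^s (v s)` for all `s`. The reversed
path is sectional because `τ (τ^s (v s)) = τ^{s+2} (v (s+2))` would force `v s = τ (v (s+2))`
by injectivity of `τ^{s+1}`.
-/

section TranslationQuiver

variable {V : Type*} {A : V → V → Type*} {τ : V → Option V}

lemma iterTau_succ (n : ℕ) (x : V) : iterTau τ (n + 1) x = (τ x).bind (iterTau τ n) := rfl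

lemma iterTau_one (x : V) : iterTau τ 1 x = τ x := by
  rw [iterTau_succ]
  cases τ x <;> rfl

lemma iterTau_succ' (n : ℕ) (x : V) : iterTau τ (n + 1) x = (iterTau τ n x).bind τ := by
  induction n generalizing x with
  | zero => rw [iterTau_one]; rfl
  | succ n ih =>
    rw [iterTau_succ, iterTau_succ]
    cases τ x with
    | none => rfl
    | some y => exact ih y

lemma TauInjective.iterate (hinj : TauInjective τ) (n : ℕ) : TauInjective (iterTau τ n) := by
  induction n with
  | zero => intro x y z hx hy; exact Option.some_injective _ (hx.trans hy.symm)
  | succ n ih =>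
    intro x y z hx hy
    rw [iterTau_succ', Option.bind_eq_some_iff] at hx hy
    obtain ⟨x', hx', hx'z⟩ := hx
    obtain ⟨y', hy', hy'z⟩ := hy
    obtain rfl : x' = y' := hinj _ _ _ hx'z hy'z
    exact ih _ _ _ hx' hy'

lemma TauInjective.tau_ne_of_iterTau (hinj : TauInjective τ) {x y a b : V} (n : ℕ)
    (ha : iterTau τ n x = some a) (hb : iterTau τ (n + 2) y = some b) (hyx : τ y ≠ some x) :
    τ a ≠ some b := by
  intro hab
  have hxb : iterTau τ (n + 1) x = some b := by rw [iterTau_succ', ha, Option.bind_some, hab]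
  rw [iterTau_succ] at hb
  obtain ⟨y', hy', hy'b⟩ := Option.bind_eq_some_iff.mp hb
  exact hyx (hy'.trans (congrArg some (hinj.iterate (n + 1) _ _ _ hy'b hxb)))

lemma nonempty_of_card_eq (hfin : ∀ x y, Finite (A x y)) {x y x' y' : V}
    (h : Nat.card (A x y) = Nat.card (A x' y')) (hne : Nonempty (A x y)) :
    Nonempty (A x' y') :=
  (Nat.card_ne_zero.mp (h ▸ Nat.card_ne_zero.mpr ⟨hne, hfin x y⟩)).1

lemma IsTranslationQuiver.exists_iterTau_card_eq (hTQ : IsTranslationQuiver A τ)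
    (hproj : ∀ x y, Nonempty (A x y) → τ y = none → τ x = none)
    {x y z : V} (hxy : Nonempty (A x y)) (n : ℕ) (hz : iterTau τ (n + 1) y = some z) :
    ∃ x', iterTau τ n x = some x' ∧ Nat.card (A z x') = Nat.card (A x y) := by
  obtain ⟨⟨hfin, -, -⟩, -, hmesh⟩ := hTQ
  induction n generalizing x y z with
  | zero =>
    rw [iterTau_one] at hz
    exact ⟨x, rfl, (hmesh x y z hz).symm⟩
  | succ n ih =>
    rw [iterTau_succ] at hz
    obtain ⟨y', hy', hy'z⟩ := Option.bind_eq_some_iff.mp hz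
    have hy'x : Nat.card (A x y) = Nat.card (A y' x) := hmesh x y y' hy'
    have hτy' : τ y' ≠ none := by
      intro h
      rw [iterTau_succ, h] at hy'z
      cases hy'z
    obtain ⟨x₁, hx₁⟩ := Option.ne_none_iff_exists'.mp
      (mt (hproj y' x (nonempty_of_card_eq hfin hy'x hxy)) hτy')
    have hx₁y' : Nat.card (A y' x) = Nat.card (A x₁ y') := hmesh y' x x₁ hx₁
    obtain ⟨x', hx', hcard⟩ :=
      ih (nonempty_of_card_eq hfin (hy'x.trans hx₁y') hxy) hy'z
    refine ⟨x', ?_, hcard.trans (hx₁y'.symm.trans hy'x.symm)⟩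
    rw [iterTau_succ, hx₁, Option.bind_some, hx']

lemma sectCond_iff {m : ℕ} {v : Fin (m + 1) → V} :
    SectCond τ m v ↔
      ∀ j (hj : j + 2 ≤ m), τ (v ⟨j + 2, by omega⟩) ≠ some (v ⟨j, by omega⟩) := by
  constructor
  · intro h j hj
    exact h (j + 1) (by omega) hj
  · intro h s hs hsm
    obtain ⟨j, rfl⟩ : ∃ j, s = j + 1 := ⟨s - 1, by omega⟩
    exact h j hsm

lemma sectCond_rev_of_forall {m : ℕ} {w : Fin (m + 1) → V}
    (h : ∀ j (hj : j + 2 ≤ m), τ (w ⟨j, by omega⟩) ≠ some (w ⟨j + 2, by omega⟩)) :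
    SectCond τ m (fun s => w s.rev) := by
  refine sectCond_iff.mpr fun j hj => ?_
  have h₁ : (⟨j + 2, by omega⟩ : Fin (m + 1)).rev = ⟨m - j - 2, by omega⟩ :=
    Fin.ext (by simp only [Fin.val_rev]; omega)
  have h₂ : (⟨j, by omega⟩ : Fin (m + 1)).rev = ⟨m - j - 2 + 2, by omega⟩ :=
    Fin.ext (by simp only [Fin.val_rev]; omega)
  simpa only [h₁, h₂] using h (m - j - 2) (by omega)

end TranslationQuiver

/-- Let `(Γ,τ)` be a translation quiver such that whenever there is an arrow
`x → y` with `y` projective, `x` is projective.  If `v 0 → v 1 → ⋯ → v m` is a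
sectional path and `τ^m (v m)` is defined, then `τ^s (v s)` is defined for all
`s` (say `τ^s (v s) = w s`), the reversed sequence
`τ^m (v m) → τ^{m-1} (v (m-1)) → ⋯ → τ (v 1) → v 0` is a sectional path, and
for each `s` the number of arrows from `τ^{s+1} (v (s+1))` to `τ^s (v s)`
equals the number `k_{s+1}` of arrows from `v s` to `v (s+1)`. -/
theorem stmt6 {V : Type*} (A : V → V → Type*) (τ : V → Option V)
    (hTQ : IsTranslationQuiver A τ)
    (hproj : ∀ x y, Nonempty (A x y) → τ y = none → τ x = none)
    (m : ℕ) (v : Fin (m+1) → V) (hv : IsSectionalPath A τ m v)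
    (hdef : ∃ z, iterTau τ m (v (Fin.last m)) = some z) :
    ∃ w : Fin (m+1) → V,
      (∀ s : Fin (m+1), iterTau τ s.val (v s) = some (w s)) ∧
      IsSectionalPath A τ m (fun s => w s.rev) ∧
      ∀ s : Fin m, Nat.card (A (w s.succ) (w s.castSucc))
        = Nat.card (A (v s.castSucc) (v s.succ)) := by
  obtain ⟨harrow, hsect⟩ := hv
  have hdefined : ∀ s : Fin (m + 1), ∃ z, iterTau τ s (v s) = some z :=
    Fin.reverseInduction hdef fun s ⟨_, hz⟩ =>
      (hTQ.exists_iterTau_card_eq hproj (harrow s) s hz).imp fun _ h => h.1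
  choose w hw using hdefined
  have hcard : ∀ s : Fin m,
      Nat.card (A (w s.succ) (w s.castSucc)) = Nat.card (A (v s.castSucc) (v s.succ)) := by
    intro s
    obtain ⟨x, hx, hcard⟩ := hTQ.exists_iterTau_card_eq hproj (harrow s) s (hw s.succ)
    obtain rfl : w s.castSucc = x := Option.some_injective _ ((hw s.castSucc).symm.trans hx)
    exact hcard
  refine ⟨w, hw, ⟨fun s => ?_, sectCond_rev_of_forall fun j hj => ?_⟩, hcard⟩
  · simp only [Fin.rev_castSucc, Fin.rev_succ]
    exact nonempty_of_card_eq hTQ.1.1 (hcard s.rev).symm (harrow s.rev)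
  · exact hTQ.2.1.tau_ne_of_iterTau j (hw ⟨j, by omega⟩) (hw ⟨j + 2, by omega⟩)
      (sectCond_iff.mp hsect j hj)
end

section
/- Let m ≥ 1 and let (Γ, τ) be a translation quiver such that for any arrow x → y in Γ, x is projective whenever y is projective. Then the translation quiver (Γ^m, τ^m) has the same property: whenever there is a sectional path of length m from x to y in Γ and τ^m(x) is defined, τ^m(y) is also defined (equivalently, if y is projective in Γ^m then x is projective in Γ^m). -/
/-!
Mesh-counting shows that an arrow `x → y` with `τ y` defined yields an arrow `τ y → x`; applied
twice, an arrow `x → y` with both translates defined yields an arrow `τ x → τ y`. Together with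
the hypothesis that `τ x` defined forces `τ y` defined, induction on `k` shows that `τ^k x`
defined forces `τ^k y` defined along every arrow `x → y`, hence along every path.
-/

section TranslationQuiver

variable {V : Type*} {A : V → V → Type*} {τ : V → Option V}

theorem IsTranslationQuiver.nonempty_arrow_of_tau_eq_some (hTQ : IsTranslationQuiver A τ)
    {x y z : V} (hxy : Nonempty (A x y)) (hy : τ y = some z) : Nonempty (A z x) := by
  have := hTQ.1.1 x y
  have hpos : 0 < Nat.card (A z x) := hTQ.2.2 x y z hy ▸ Nat.card_pos
  exact (Nat.card_pos_iff.mp hpos).1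

theorem exists_tau_eq_some_of_arrow
    (hproj : ∀ x y, Nonempty (A x y) → τ y = none → τ x = none)
    {x y z : V} (hxy : Nonempty (A x y)) (hx : τ x = some z) : ∃ w, τ y = some w :=
  Option.ne_none_iff_exists'.mp fun hy => by simp [hproj x y hxy hy] at hx

theorem exists_iterTau_eq_some_of_arrow (hTQ : IsTranslationQuiver A τ)
    (hproj : ∀ x y, Nonempty (A x y) → τ y = none → τ x = none) (k : ℕ) :
    ∀ {x y : V}, Nonempty (A x y) → (∃ z, iterTau τ k x = some z) →
      ∃ z, iterTau τ k y = some z := by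
  induction k with
  | zero => exact fun {_ y} _ _ => ⟨y, rfl⟩
  | succ k ih =>
    rintro x y hxy ⟨z, hz⟩
    obtain ⟨x', hx'⟩ : ∃ x', τ x = some x' := by
      cases hx : τ x <;> simp_all [iterTau]
    obtain ⟨y', hy'⟩ := exists_tau_eq_some_of_arrow hproj hxy hx'
    have hy'x : Nonempty (A y' x) := hTQ.nonempty_arrow_of_tau_eq_some hxy hy'
    have hx'y' : Nonempty (A x' y') := hTQ.nonempty_arrow_of_tau_eq_some hy'x hx'
    simp only [iterTau, hx', hy', Option.bind_some] at hz ⊢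
    exact ih hx'y' ⟨z, hz⟩

end TranslationQuiver

theorem stmt11_general {V : Type*} (A : V → V → Type*) (τ : V → Option V)
    (hTQ : IsTranslationQuiver A τ)
    (hproj : ∀ x y, Nonempty (A x y) → τ y = none → τ x = none)
    (m : ℕ) :
    ∀ v : Fin (m+1) → V, IsSectionalPath A τ m v →
      (∃ z, iterTau τ m (v 0) = some z) →
      ∃ z, iterTau τ m (v (Fin.last m)) = some z := fun v hv h0 =>
  Fin.induction (motive := fun s => ∃ z, iterTau τ m (v s) = some z) h0
    (fun s hs => exists_iterTau_eq_some_of_arrow hTQ hproj m (hv.1 s) hs) (Fin.last m)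

/-- Let `m ≥ 1` and let `(Γ,τ)` be a translation quiver such that for any
arrow `x → y`, `x` is projective whenever `y` is projective.  Then
`(Γ^m, τ^m)` has the same property: whenever there is a sectional path of
length `m` from `x` to `y` in `Γ` (an arrow of `Γ^m`) and `τ^m x` is defined,
`τ^m y` is also defined (equivalently, if `y` is projective in `Γ^m` then `x`
is projective in `Γ^m`). -/
theorem stmt11 {V : Type*} (A : V → V → Type*) (τ : V → Option V)
    (hTQ : IsTranslationQuiver A τ)
    (hproj : ∀ x y, Nonempty (A x y) → τ y = none → τ x = none)
    (m : ℕ) (hm : 1 ≤ m) :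
    ∀ v : Fin (m+1) → V, IsSectionalPath A τ m v →
      (∃ z, iterTau τ m (v 0) = some z) →
      ∃ z, iterTau τ m (v (Fin.last m)) = some z :=
  stmt11_general A τ hTQ hproj m
end

section
/- There exists a finite translation quiver (Γ, τ) whose square (Γ^2, τ^2) is not a translation quiver. For instance, take Γ with five vertices a, b, c, d, e, single arrows b → e, d → e and e → c, and τ defined only by τ(b) = a and τ(c) = b: then (Γ, τ) is a translation quiver, but in Γ^2 there is exactly one sectional path of length 2 from d to c while there is no sectional path of length 2 from τ^2(c) = a to d, so (Γ^2, τ^2) fails the translation quiver axiom. -/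
/-- The quiver on five vertices `a = 0`, `b = 1`, `c = 2`, `d = 3`, `e = 4`
with single arrows `b → e`, `d → e` and `e → c`. -/
def exA : Fin 5 → Fin 5 → Type :=
  fun x y => PLift ((x = 1 ∧ y = 4) ∨ (x = 3 ∧ y = 4) ∨ (x = 4 ∧ y = 2))

/-- The translation defined only by `τ b = a` and `τ c = b`. -/
def exTau : Fin 5 → Option (Fin 5) :=
  fun x => if x = 1 then some 0 else if x = 2 then some 1 else none

/-!
A sectional path `x → y → z` of length `2` is just a pair of arrows through a middle vertex `y`,
subject only to `τ z ≠ x`; so in that case the number of them is `∑ y, |A x y| * |A y z|`.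
In the example this gives exactly one path `d → e → c`, and none from `a = τ² c` to `d`
because `a` is a source, so the square violates the translation quiver axiom at `(d, c)`.
-/

lemma QuiverLocFin.of_finite {V : Type*} [Finite V] {A : V → V → Type*}
    (h : ∀ x y, Finite (A x y)) : QuiverLocFin A :=
  ⟨h, fun _ => Set.toFinite _, fun _ => Set.toFinite _⟩

section SectionalPaths

variable {V : Type*} {A : V → V → Type*} {τ : V → Option V} {x z : V}

lemma sectCond_two_iff {v : Fin 3 → V} : SectCond τ 2 v ↔ τ (v 2) ≠ some (v 0) := by
  refine ⟨fun h => h 1 le_rfl le_rfl, fun h s hs hs2 => ?_⟩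
  obtain rfl : s = 1 := by omega
  exact h

def sectPathTwoVerticesEquiv (hτ : τ z ≠ some x) :
    V ≃ {v : Fin 3 → V // v 0 = x ∧ v (Fin.last 2) = z ∧ SectCond τ 2 v} where
  toFun y := ⟨![x, y, z], rfl, rfl, sectCond_two_iff.2 hτ⟩
  invFun v := v.1 1
  left_inv _ := rfl
  right_inv v := by
    obtain ⟨v, hx, hz, -⟩ := v
    ext i
    fin_cases i
    exacts [hx.symm, rfl, hz.symm]

theorem card_sectPath_two [Fintype V] [∀ x y, Finite (A x y)] (hτ : τ z ≠ some x) :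
    Nat.card (SectPath A τ 2 x z) = ∑ y, Nat.card (A x y) * Nat.card (A y z) := by
  let e := sectPathTwoVerticesEquiv hτ
  have := Fintype.ofEquiv V e
  rw [SectPath, Nat.card_sigma]
  refine (Fintype.sum_equiv e _ _ fun y => ?_).symm
  rw [Nat.card_pi, Fin.prod_univ_two]
  rfl

end SectionalPaths

lemma Nat.card_plift_prop (p : Prop) [Decidable p] : Nat.card (PLift p) = if p then 1 else 0 := by
  split_ifs with h <;> simp [h]

instance (x y : Fin 5) : Finite (exA x y) := inferInstanceAs (Finite (PLift _))

lemma card_exA (x y : Fin 5) :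
    Nat.card (exA x y) =
      if (x = 1 ∧ y = 4) ∨ (x = 3 ∧ y = 4) ∨ (x = 4 ∧ y = 2) then 1 else 0 :=
  Nat.card_plift_prop _

theorem isTranslationQuiver_exA : IsTranslationQuiver exA exTau := by
  refine ⟨.of_finite inferInstance, by unfold TauInjective; decide, ?_⟩
  simp only [card_exA]
  decide

lemma iterTau_exTau_two : iterTau exTau 2 2 = some 0 := rfl

lemma card_sectPath_exA_d_c : Nat.card (SectPath exA exTau 2 3 2) = 1 := by
  rw [card_sectPath_two (by decide)]
  simp only [card_exA]
  decide

lemma card_sectPath_exA_a_d : Nat.card (SectPath exA exTau 2 0 3) = 0 := by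
  rw [card_sectPath_two (by decide)]
  simp only [card_exA]
  decide

/-- There is a finite translation quiver whose square is not a translation
quiver: for the example `(exA, exTau)` above (which is a translation quiver on
a finite vertex set), `τ² c = a` is defined, there is exactly one sectional
path of length `2` from `d` to `c` but no sectional path of length `2` from
`a = τ² c` to `d`; hence `(Γ², τ²)` fails the translation quiver axiom, i.e.
it is not a translation quiver. -/
theorem stmt14 :
    IsTranslationQuiver exA exTau ∧
    iterTau exTau 2 2 = some 0 ∧
    Nat.card (SectPath exA exTau 2 3 2) = 1 ∧
    Nat.card (SectPath exA exTau 2 0 3) = 0 ∧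
    ¬ IsTranslationQuiver (fun x y => SectPath exA exTau 2 x y) (iterTau exTau 2) := by
  refine ⟨isTranslationQuiver_exA, iterTau_exTau_two, card_sectPath_exA_d_c,
    card_sectPath_exA_a_d, fun h => ?_⟩
  have := h.2.2 3 2 0 iterTau_exTau_two
  rw [card_sectPath_exA_d_c, card_sectPath_exA_a_d] at this
  exact one_ne_zero this
end
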